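/- arXiv:2102.10094 — 2 statements merged into one kernel-verified Lean document; each statement's English description precedes it below -/
import Mathlib

section
/- The 2-Dyck language D₂ is not recognizable by any deterministic real-time k-counter automaton, for any k. -/
/-- Counter operations: increment, decrement, no-op, or reset to zero. -/
inductive CounterOp : Type | inc | dec | noop | reset

def CounterOp.apply : CounterOp → ℤ → ℤ
  | .inc, z => z + 1
  | .dec, z => z - 1
  | .noop, z => z
  | .reset, _ => 0

/-- A deterministic real-time `k`-counter automaton: transitions and counter updates
depend on the input symbol, the current state, and the zero-pattern of the counters. -/
structure CounterAutomaton (A Q : Type) (k : ℕ) where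
  start : Q
  step : A → Q → (Fin k → Bool) → Q
  update : A → Q → (Fin k → Bool) → Fin k → CounterOp
  accept : Set (Q × (Fin k → Bool))

namespace CounterAutomaton

variable {A Q : Type} {k : ℕ}

/-- Zero-pattern of a counter vector. -/
def zeros (c : Fin k → ℤ) : Fin k → Bool := fun i => decide (c i = 0)

/-- One step of computation on a configuration (state, counter values). -/
def stepConfig (M : CounterAutomaton A Q k) (cfg : Q × (Fin k → ℤ)) (σ : A) :
    Q × (Fin k → ℤ) :=
  (M.step σ cfg.1 (zeros cfg.2),
    fun i => (M.update σ cfg.1 (zeros cfg.2) i).apply (cfg.2 i))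

/-- The configuration reached after reading a string, starting from the initial state
with all counters zero. -/
def run (M : CounterAutomaton A Q k) (w : List A) : Q × (Fin k → ℤ) :=
  w.foldl M.stepConfig (M.start, fun _ => 0)

/-- The language accepted by a counter automaton. -/
def accepts (M : CounterAutomaton A Q k) : Language A :=
  {w | ((M.run w).1, zeros (M.run w).2) ∈ M.accept}

end CounterAutomaton

/-- Alphabet of two bracket pairs. -/
inductive P2 : Type | op1 | cl1 | op2 | cl2
  deriving DecidableEq

instance instFintypeP2 : Fintype P2 :=
  ⟨{P2.op1, P2.cl1, P2.op2, P2.cl2}, fun x => by cases x <;> simp⟩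

/-- The 2-Dyck language, generated by S → SS | ε | (₁S)₁ | (₂S)₂. -/
inductive Dyck2 : List P2 → Prop
  | eps : Dyck2 []
  | concat {u v : List P2} : Dyck2 u → Dyck2 v → Dyck2 (u ++ v)
  | wrap1 {u : List P2} : Dyck2 u → Dyck2 (P2.op1 :: u ++ [P2.cl1])
  | wrap2 {u : List P2} : Dyck2 u → Dyck2 (P2.op2 :: u ++ [P2.cl2])

/-!
After `n` steps every counter of a real-time `k`-counter automaton lies in `[-n, n]`, so at most
`|Q| (2n + 1)^k` configurations are reachable by words of length `n`. The `2^n` words of `n` opening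
brackets are pairwise separated by `D₂`: each has a single closing completion, which the stack
recognizer of `D₂` reads off. So the automaton would need `2^n` configurations after `n` steps,
impossible once the exponential outgrows the polynomial.
-/

open Filter Topology

theorem eventually_mul_pow_lt_two_pow (c K : ℕ) :
    ∀ᶠ n : ℕ in atTop, c * (2 * n + 1) ^ K < 2 ^ n := by
  have hlim : Tendsto (fun n : ℕ => (c * 3 ^ K : ℝ) * ((n : ℝ) ^ K / 2 ^ n)) atTop (𝓝 0) := by
    simpa using (tendsto_pow_const_div_const_pow_of_one_lt K one_lt_two).const_mul
      ((c : ℝ) * 3 ^ K)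
  filter_upwards [hlim.eventually_lt_const one_pos, eventually_ge_atTop 1] with n hn hn1
  have hpoly : c * (2 * n + 1) ^ K ≤ c * 3 ^ K * n ^ K := by
    rw [mul_assoc, ← mul_pow]; gcongr; omega
  have hreal : (c * 3 ^ K : ℝ) * n ^ K < 2 ^ n := by
    rwa [mul_div_assoc', div_lt_one (by positivity)] at hn
  exact hpoly.trans_lt (by exact_mod_cast hreal)

theorem CounterOp.abs_apply_le (op : CounterOp) (z : ℤ) : |op.apply z| ≤ |z| + 1 := by
  cases op with
  | inc => exact abs_add_le z 1
  | dec => exact abs_sub z 1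
  | noop => exact le_add_of_nonneg_right zero_le_one
  | reset => simpa [CounterOp.apply] using add_nonneg (abs_nonneg z) zero_le_one

namespace CounterAutomaton

variable {A Q : Type} {k : ℕ} (M : CounterAutomaton A Q k)

theorem run_append (u v : List A) : M.run (u ++ v) = v.foldl M.stepConfig (M.run u) :=
  List.foldl_append

theorem abs_foldl_stepConfig_le (w : List A) (cfg : Q × (Fin k → ℤ)) (m : ℤ)
    (hcfg : ∀ i, |cfg.2 i| ≤ m) (i : Fin k) :
    |(w.foldl M.stepConfig cfg).2 i| ≤ m + w.length := by
  induction w generalizing cfg m with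
  | nil => simpa using hcfg i
  | cons a w ih =>
    have hstep : ∀ j, |(M.stepConfig cfg a).2 j| ≤ m + 1 := fun j =>
      (CounterOp.abs_apply_le _ _).trans (by linarith [hcfg j])
    simpa [add_assoc, add_comm (1 : ℤ)] using ih (M.stepConfig cfg a) (m + 1) hstep

theorem abs_run_le (w : List A) (i : Fin k) : |(M.run w).2 i| ≤ w.length := by
  simpa [run] using M.abs_foldl_stepConfig_le w (M.start, fun _ => 0) 0 (by simp) i

theorem run_injective_of_separated {ι : Type} (w : ι → List A)
    (hsep : ∀ i j, (∀ v, w i ++ v ∈ M.accepts → w j ++ v ∈ M.accepts) → j = i) :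
    Function.Injective fun i => M.run (w i) := by
  intro i j hij
  refine (hsep i j fun v hv => ?_).symm
  have hrun : M.run (w j ++ v) = M.run (w i ++ v) := by
    rw [run_append, run_append]; exact congrArg (v.foldl M.stepConfig) hij.symm
  change (_, _) ∈ M.accept
  rw [hrun]
  exact hv

theorem card_le_of_run_injective [Fintype Q] {ι : Type} [Fintype ι] (n : ℕ)
    (w : ι → List A) (hw : ∀ i, (w i).length ≤ n)
    (hinj : Function.Injective fun i => M.run (w i)) :
    Fintype.card ι ≤ Fintype.card Q * (2 * n + 1) ^ k := by
  let bounded (i : ι) : Q × (Fin k → Set.Icc (-(n : ℤ)) n) :=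
    ((M.run (w i)).1, fun c => ⟨(M.run (w i)).2 c, abs_le.mp <|
      (M.abs_run_le (w i) c).trans (by exact_mod_cast hw i)⟩)
  have hbounded : Function.Injective bounded := fun i j hij =>
    hinj (Prod.ext (congrArg Prod.fst hij :)
      (funext fun c => congrArg Subtype.val (congrFun (congrArg Prod.snd hij) c)))
  have hIcc : ((n : ℤ) + 1 + n).toNat = 2 * n + 1 := by omega
  simpa [hIcc] using Fintype.card_le_of_injective bounded hbounded

end CounterAutomaton

namespace P2

def opening : Bool → P2 | false => op1 | true => op2
def closing : Bool → P2 | false => cl1 | true => cl2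

/-- The stack recognizer of `Dyck2`, started from a given stack (top first, `true` for the
second bracket type); `none` signals a mismatched closing bracket. -/
def pushPop : List P2 → List Bool → Option (List Bool)
  | [], s => some s
  | op1 :: w, s => pushPop w (false :: s)
  | op2 :: w, s => pushPop w (true :: s)
  | cl1 :: w, false :: s => pushPop w s
  | cl2 :: w, true :: s => pushPop w s
  | cl1 :: _, _ => none
  | cl2 :: _, _ => none

theorem pushPop_append (u v : List P2) (s : List Bool) :
    pushPop (u ++ v) s = (pushPop u s).bind (pushPop v) := by
  induction u generalizing s with
  | nil => rfl
  | cons a u ih =>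
    match a, s with
    | op1, s => exact ih _
    | op2, s => exact ih _
    | cl1, false :: s => exact ih _
    | cl2, true :: s => exact ih _
    | cl1, [] | cl1, true :: _ | cl2, [] | cl2, false :: _ => rfl

theorem pushPop_map_opening (l s : List Bool) :
    pushPop (l.map opening) s = some (l.reverse ++ s) := by
  induction l generalizing s with
  | nil => rfl
  | cons b l ih => cases b <;> simpa [opening, pushPop] using ih _

theorem eq_of_pushPop_map_closing {l s : List Bool}
    (h : pushPop (l.map closing) s = some []) : s = l := by
  induction l generalizing s with
  | nil => simpa [pushPop] using h.symm
  | cons b l ih =>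
    match b, s with
    | false, false :: s | true, true :: s => exact congrArg _ (ih h)
    | false, [] | false, true :: _ | true, [] | true, false :: _ => simp [closing, pushPop] at h

end P2

open P2

theorem Dyck2.pushPop_eq {w : List P2} (h : Dyck2 w) (s : List Bool) : pushPop w s = some s := by
  induction h generalizing s with
  | eps => rfl
  | concat _ _ ihu ihv => rw [pushPop_append, ihu, Option.bind_some, ihv]
  | wrap1 _ ih | wrap2 _ ih => rw [List.cons_append, pushPop, pushPop_append, ih]; rfl

theorem dyck2_map_opening_append_closing (l : List Bool) :
    Dyck2 (l.map opening ++ l.reverse.map closing) := by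
  induction l with
  | nil => exact Dyck2.eps
  | cons b l ih =>
    cases b
    · simpa [opening, closing] using Dyck2.wrap1 ih
    · simpa [opening, closing] using Dyck2.wrap2 ih

theorem eq_of_dyck2_map_opening_append_closing {l l' : List Bool}
    (h : Dyck2 (l'.map opening ++ l.reverse.map closing)) : l' = l := by
  have hstack := h.pushPop_eq []
  rw [pushPop_append, pushPop_map_opening, List.append_nil, Option.bind_some] at hstack
  simpa using congrArg List.reverse (eq_of_pushPop_map_closing hstack)

/-- The 2-Dyck language is not recognized by any deterministic real-time `k`-counter
automaton, for any `k`. -/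
theorem dyck2_not_counter_recognizable :
    ¬ ∃ (k : ℕ) (Q : Type) (_ : Fintype Q) (M : CounterAutomaton P2 Q k),
        M.accepts = {w : List P2 | Dyck2 w} := by
  rintro ⟨k, Q, _, M, hM⟩
  obtain ⟨n, hn⟩ := (eventually_mul_pow_lt_two_pow (Fintype.card Q) k).exists
  let w (b : Fin n → Bool) : List P2 := (List.ofFn b).map opening
  have hinj : Function.Injective fun b => M.run (w b) :=
    M.run_injective_of_separated w fun b b' hsep => by
      have hdyck := dyck2_map_opening_append_closing (List.ofFn b)
      simp only [hM] at hsep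
      exact List.ofFn_injective (eq_of_dyck2_map_opening_append_closing (hsep _ hdyck))
  have hcard := M.card_le_of_run_injective n w (by simp [w]) hinj
  simp only [Fintype.card_fun, Fintype.card_bool, Fintype.card_fin] at hcard
  omega
end

section
/- If f : Σ* → ℚ is computed by a weighted finite automaton over the rational field with r states, then the Hankel matrix of f has rank at most r. -/
/-!
Splitting a word `u ++ v` at the boundary writes its weight as the dot product of the forward
vector of `u` with the backward vector of `v`. Hence every finite Hankel block factors as
(rows × Q) · (Q × columns) and has rank at most `|Q|`.
-/

/-- A weighted finite automaton over a semiring `K`, with alphabet `A` and states `Q`: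
initial weights, transition weights, and final weights. -/
structure WFA (K A Q : Type) where
  init : Q → K
  tr : Q → A → Q → K

  fin : Q → K

namespace WFA

variable {K A Q : Type} [Semiring K] [Fintype Q]

/-- Forward weight vector after reading a string (sum over all paths). -/
def vec (M : WFA K A Q) (w : List A) : Q → K :=
  w.foldl (fun v σ => fun q' => ∑ q, v q * M.tr q σ q') M.init

/-- The weight a WFA assigns to a string: the sum over all paths consuming the string of
the product of the initial weight, the transition weights, and the final weight. -/
def weight (M : WFA K A Q) (w : List A) : K := ∑ q, M.vec w q * M.fin q

def step (M : WFA K A Q) (x : Q → K) (σ : A) : Q → K :=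
  fun q' => ∑ q, x q * M.tr q σ q'

def back (M : WFA K A Q) : List A → Q → K
  | [], q => M.fin q
  | σ :: w, q => ∑ q', M.tr q σ q' * M.back w q'

theorem vec_append (M : WFA K A Q) (u v : List A) :
    M.vec (u ++ v) = v.foldl M.step (M.vec u) :=
  List.foldl_append

theorem sum_foldl_step_mul_fin (M : WFA K A Q) (v : List A) (x : Q → K) :
    ∑ q, v.foldl M.step x q * M.fin q = ∑ q, x q * M.back v q := by
  induction v generalizing x with
  | nil => rfl
  | cons σ v ih =>
    rw [List.foldl_cons, ih]
    simp only [step, back, Finset.sum_mul, Finset.mul_sum, mul_assoc]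
    exact Finset.sum_comm

theorem weight_append (M : WFA K A Q) (u v : List A) :
    M.weight (u ++ v) = ∑ q, M.vec u q * M.back v q := by
  rw [weight, vec_append, sum_foldl_step_mul_fin]

theorem hankel_eq_mul {ι κ : Type} (M : WFA K A Q) (rows : ι → List A) (cols : κ → List A) :
    Matrix.of (fun i j => M.weight (rows i ++ cols j)) =
      Matrix.of (fun i q => M.vec (rows i) q) * Matrix.of (fun q j => M.back (cols j) q) := by
  ext i j
  simp only [weight_append, Matrix.mul_apply, Matrix.of_apply]

end WFA

theorem WFA.rank_hankel_le {K A Q : Type} [CommSemiring K] [StrongRankCondition K] [Fintype Q]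
    {ι κ : Type} [Fintype κ] (M : WFA K A Q) (rows : ι → List A) (cols : κ → List A) :
    (Matrix.of fun i j => M.weight (rows i ++ cols j)).rank ≤ Fintype.card Q := by
  rw [M.hankel_eq_mul]
  exact (Matrix.rank_mul_le_left _ _).trans (Matrix.rank_le_card_width _)

theorem hankel_rank_le_states_general (A : Type) (f : List A → ℚ)
    (Q : Type) [Fintype Q] (M : WFA ℚ A Q) (hM : ∀ w, M.weight w = f w)
    (m n : ℕ) (rows : Fin m → List A) (cols : Fin n → List A) :
    Matrix.rank (Matrix.of fun i j => f (rows i ++ cols j)) ≤ Fintype.card Q := by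
  obtain rfl : M.weight = f := funext hM
  exact M.rank_hankel_le rows cols

/-- If `f` is computed by a rational WFA with `r` states, then the Hankel matrix of `f`
has rank at most `r`: every finite submatrix (rows indexed by prefixes, columns by
suffixes, entries `f (prefix ++ suffix)`) has rank at most `r`. -/
theorem hankel_rank_le_states (A : Type) [Fintype A] (f : List A → ℚ)
    (Q : Type) [Fintype Q] (M : WFA ℚ A Q) (hM : ∀ w, M.weight w = f w)
    (m n : ℕ) (rows : Fin m → List A) (cols : Fin n → List A) :
    Matrix.rank (Matrix.of fun i j => f (rows i ++ cols j)) ≤ Fintype.card Q :=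
  hankel_rank_le_states_general A f Q M hM m n rows cols
end
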